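/- arXiv:1912.04741 — 2 statements merged into one kernel-verified Lean document; each statement's English description precedes it below -/
import Mathlib

section
/- A continuous global section s : X^n → PX of the evaluation fibration e_n exists if and only if X is contractible, for X path-connected and n ≥ 2. -/
/-!
Restricting `s (x, x₀, …, x₀)` to `[0, 1/(n-1)]` gives paths from `x` to `x₀` depending
continuously on `x`, i.e. a contraction of `X`. Conversely, a contraction `H : id ≃ const x₀`
provides the paths `H (·, x)` from `x` to `x₀`, and gluing `H (·, pᵢ)` traversed out and back
around the `i`-th sample point yields a path through `p₀, …, p_{n-1}` depending continuously on `p`.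
-/

/-- The evaluation map `e_n : PX → Xⁿ`. -/
noncomputable def evalMap (X : Type*) [TopologicalSpace X] (n : ℕ) :
    C(unitInterval, X) → (Fin n → X) :=
  fun γ i => γ (Set.projIcc (0 : ℝ) 1 zero_le_one ((i : ℝ) / ((n : ℝ) - 1)))

open Set unitInterval

noncomputable def samplePoint (n : ℕ) (i : Fin n) : I :=
  projIcc 0 1 zero_le_one ((i : ℝ) / ((n : ℝ) - 1))

theorem samplePoint_eq_zero {n : ℕ} {i : Fin n} (hi : i.val = 0) : samplePoint n i = 0 := by
  simp [samplePoint, hi]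

theorem sub_one_mul_samplePoint {n : ℕ} (i : Fin n) : ((n : ℝ) - 1) * samplePoint n i = i := by
  rcases Nat.eq_zero_or_pos i.val with hi | hi
  · simp [samplePoint_eq_zero hi, hi]
  have hm : (i : ℝ) + 1 ≤ n := by exact_mod_cast i.isLt
  have hi' : (1 : ℝ) ≤ i := by exact_mod_cast hi
  have hmem : (i : ℝ) / ((n : ℝ) - 1) ∈ Icc (0 : ℝ) 1 :=
    ⟨div_nonneg (by positivity) (by linarith), (div_le_one (by linarith)).mpr (by linarith)⟩
  rw [samplePoint, projIcc_of_mem _ hmem]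
  field_simp [show (n : ℝ) - 1 ≠ 0 by linarith]

theorem Nat.eq_of_abs_sub_lt_half {a : ℝ} {i j : ℕ} (hi : |a - i| < 1 / 2)
    (hj : |a - j| ≤ 1 / 2) : i = j := by
  obtain ⟨hi₁, hi₂⟩ := abs_lt.mp hi
  obtain ⟨hj₁, hj₂⟩ := abs_le.mp hj
  have h₁ : i < j + 1 := by exact_mod_cast (by linarith : (i : ℝ) < j + 1)
  have h₂ : j < i + 1 := by exact_mod_cast (by linarith : (j : ℝ) < i + 1)
  omega

noncomputable def tent (a : ℝ) : I := projIcc 0 1 zero_le_one (2 * |a|)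

theorem continuous_tent : Continuous tent :=
  continuous_projIcc.comp (continuous_const.mul continuous_abs)

@[simp] theorem tent_zero : tent 0 = 0 := by simp [tent]

theorem tent_of_abs_eq_half {a : ℝ} (ha : |a| = 1 / 2) : tent a = 1 := by
  simp [tent, ha]

section

variable {X : Type*} [TopologicalSpace X]

theorem ContractibleSpace.of_evalMap_section [Nonempty X] {n : ℕ} (hn : 2 ≤ n)
    {s : (Fin n → X) → C(I, X)} (hs : Continuous s) (hsec : ∀ p, evalMap X n (s p) = p) :
    ContractibleSpace X := by
  obtain ⟨x₀⟩ := ‹Nonempty X›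
  let i₀ : Fin n := ⟨0, by omega⟩
  let i₁ : Fin n := ⟨1, hn⟩
  let p : X → Fin n → X := fun x => Function.update (fun _ => x₀) i₀ x
  have hp : Continuous p := continuous_const.update i₀ continuous_id
  have hs_sample : ∀ x i, s (p x) (samplePoint n i) = p x i := fun x i => congrFun (hsec (p x)) i
  rw [contractible_iff_id_nullhomotopic]
  refine ⟨x₀, ⟨{
    toFun q := s (p q.2) (q.1 * samplePoint n i₁)
    continuous_toFun := ?_
    map_zero_left := ?_
    map_one_left := ?_ }⟩⟩
  · exact continuous_eval.comp ((hs.comp (hp.comp continuous_snd)).prodMk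
      (continuous_fst.mul continuous_const))
  · intro x
    change s (p x) (0 * _) = x
    rw [zero_mul, ← samplePoint_eq_zero (i := i₀) rfl, hs_sample]
    simp [p]
  · intro x
    simpa [p, i₀, i₁] using hs_sample x i₁

section Zigzag

variable {n : ℕ} {x₀ : X} (H : (ContinuousMap.id X).Homotopy (ContinuousMap.const X x₀))

noncomputable def zigzagPiece (i : Fin n) (q : (Fin n → X) × I) : X :=
  H (tent (((n : ℝ) - 1) * q.2 - i), q.1 i)

theorem continuous_zigzagPiece (i : Fin n) : Continuous (zigzagPiece H i) :=
  H.continuous.comp ((continuous_tent.comp (by fun_prop)).prodMk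
    ((continuous_apply i).comp continuous_fst))

theorem zigzagPiece_eq {i j : Fin n} {q : (Fin n → X) × I}
    (hi : |((n : ℝ) - 1) * q.2 - i| ≤ 1 / 2) (hj : |((n : ℝ) - 1) * q.2 - j| ≤ 1 / 2) :
    zigzagPiece H i q = zigzagPiece H j q := by
  rcases eq_or_ne i j with rfl | hij
  · rfl
  have hi' : |((n : ℝ) - 1) * q.2 - i| = 1 / 2 :=
    hi.eq_of_not_lt fun h => hij (Fin.ext (Nat.eq_of_abs_sub_lt_half h hj))
  have hj' : |((n : ℝ) - 1) * q.2 - j| = 1 / 2 :=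
    hj.eq_of_not_lt fun h => hij (Fin.ext (Nat.eq_of_abs_sub_lt_half h hi)).symm
  simp [zigzagPiece, tent_of_abs_eq_half hi', tent_of_abs_eq_half hj']

variable [NeZero n]

theorem exists_abs_sub_le_half (t : I) : ∃ i : Fin n, |((n : ℝ) - 1) * t - i| ≤ 1 / 2 := by
  set a := ((n : ℝ) - 1) * t
  have ha₀ : 0 ≤ a := mul_nonneg (by simpa using NeZero.one_le) t.2.1
  have ha₁ : a ≤ n - 1 := mul_le_of_le_one_right (by simpa using NeZero.one_le) t.2.2
  obtain ⟨hr₁, hr₂⟩ := abs_le.mp (abs_sub_round a)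
  have hr₀ : (-1 : ℤ) < round a := by exact_mod_cast (by linarith : (-1 : ℝ) < round a)
  have hrn : round a < n := by exact_mod_cast (by linarith : (round a : ℝ) < n)
  refine ⟨⟨(round a).toNat, by omega⟩, ?_⟩
  have hcast : (((round a).toNat : ℕ) : ℝ) = (round a : ℝ) := by
    exact_mod_cast Int.toNat_of_nonneg (by omega)
  simpa [hcast] using abs_sub_round a

noncomputable def nearestIndex (n : ℕ) [NeZero n] (t : I) : Fin n :=
  (exists_abs_sub_le_half t).choose

theorem abs_sub_nearestIndex_le (t : I) :
    |((n : ℝ) - 1) * t - nearestIndex n t| ≤ 1 / 2 :=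
  (exists_abs_sub_le_half t).choose_spec

theorem nearestIndex_samplePoint (i : Fin n) : nearestIndex n (samplePoint n i) = i := by
  refine (Fin.ext (Nat.eq_of_abs_sub_lt_half ?_ (abs_sub_nearestIndex_le _))).symm
  simp [sub_one_mul_samplePoint]

/-- The path `p₀ ⇝ x₀ ⇝ p₁ ⇝ x₀ ⇝ ⋯ ⇝ p_{n-1}`: near the `i`-th sample point it runs along
`H (·, p i)` out to `x₀` and back. -/
noncomputable def zigzag (q : (Fin n → X) × I) : X :=
  zigzagPiece H (nearestIndex n q.2) q

theorem continuous_zigzag : Continuous (zigzag H : (Fin n → X) × I → X) := by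
  let C : Fin n → Set ((Fin n → X) × I) := fun i => {q | |((n : ℝ) - 1) * q.2 - i| ≤ 1 / 2}
  refine (locallyFinite_of_finite C).continuous ?_ (fun i => ?_) fun i => ?_
  · exact eq_univ_of_forall fun q => mem_iUnion.mpr ⟨_, abs_sub_nearestIndex_le q.2⟩
  · exact isClosed_le (by fun_prop) continuous_const
  · exact (continuous_zigzagPiece H i).continuousOn.congr fun q hq =>
      zigzagPiece_eq H (abs_sub_nearestIndex_le q.2) hq

theorem zigzag_samplePoint (p : Fin n → X) (i : Fin n) : zigzag H (p, samplePoint n i) = p i := by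
  simp [zigzag, zigzagPiece, nearestIndex_samplePoint, sub_one_mul_samplePoint]

end Zigzag

theorem exists_evalMap_section (n : ℕ) [NeZero n] [ContractibleSpace X] :
    ∃ s : (Fin n → X) → C(I, X), Continuous s ∧ ∀ p, evalMap X n (s p) = p := by
  obtain ⟨x₀, ⟨H⟩⟩ := (contractible_iff_id_nullhomotopic X).mp ‹_›
  let F : C((Fin n → X) × I, X) := ⟨zigzag H, continuous_zigzag H⟩
  exact ⟨F.curry, F.curry.continuous, fun p => funext (zigzag_samplePoint H p)⟩

end

/-- A continuous global section of the evaluation fibration `e_n` exists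
iff `X` is contractible. -/
theorem stmt1 (X : Type*) [TopologicalSpace X] (n : ℕ) (hn : 2 ≤ n)
    [PathConnectedSpace X] :
    (∃ s : (Fin n → X) → C(unitInterval, X),
        Continuous s ∧ ∀ p, evalMap X n (s p) = p) ↔ ContractibleSpace X := by
  refine ⟨fun ⟨_, hs, hsec⟩ => .of_evalMap_section hn hs hsec, fun _ => ?_⟩
  have : NeZero n := ⟨by omega⟩
  exact exists_evalMap_section n
end

section
/- Suppose A ⊆ X^n admits a continuous section s_A : A → PX of the evaluation fibration e_n, and B ⊆ X^n can be continuously deformed into A within X^n (i.e., there is a homotopy H : B × [0,1] → X^n with H(b,0) = b and H(b,1) ∈ A). Then B admits a continuous section s_B : B → PX of e_n. -/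
open Set unitInterval

theorem locallyFinite_Icc_intCast : LocallyFinite fun j : ℤ => Icc (j : ℝ) (j + 1) := by
  intro u
  refine ⟨Ioo (u - 1) (u + 1), Ioo_mem_nhds (by linarith) (by linarith),
    (finite_Icc (⌊u⌋ - 1) (⌊u⌋ + 1)).subset ?_⟩
  rintro j ⟨v, ⟨hjv, hvj⟩, huv, hvu⟩
  have h1 : (j : ℝ) - 1 ≤ u := by linarith
  have h2 : u < ((j + 2 : ℤ) : ℝ) := by push_cast; linarith
  constructor
  · have := Int.floor_lt.2 h2; omega
  · have := Int.le_floor.2 (by exact_mod_cast h1 : ((j - 1 : ℤ) : ℝ) ≤ u); omega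

theorem Path.continuous_extend_floor_fract {Y Z : Type*} [TopologicalSpace Y]
    [TopologicalSpace Z] {x : ℤ → Y → Z} (γ : ∀ j y, Path (x j y) (x (j + 1) y))
    (hγ : ∀ j, Continuous ↿(γ j)) :
    Continuous fun p : Y × ℝ => (γ ⌊p.2⌋ p.1).extend (Int.fract p.2) := by
  refine (locallyFinite_Icc_intCast.preimage_continuous continuous_snd).continuous
    (eq_univ_of_forall fun p => mem_iUnion.2 ⟨⌊p.2⌋, Int.floor_le _, (Int.lt_floor_add_one _).le⟩)
    (fun j => isClosed_Icc.preimage continuous_snd) fun j => ?_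
  have hcell : Continuous fun p : Y × ℝ => (γ j p.1).extend (p.2 - j) :=
    (Path.continuous_uncurry_extend_of_continuous_family _ (hγ j)).comp
      (continuous_fst.prodMk (continuous_snd.sub continuous_const))
  refine hcell.continuousOn.congr ?_
  rintro ⟨y, u⟩ ⟨hju, huj⟩
  rcases huj.lt_or_eq with hlt | rfl
  · have hfloor : ⌊u⌋ = j := Int.floor_eq_iff.2 ⟨hju, hlt⟩
    subst hfloor
    rfl
  · have hfloor : ⌊(j : ℝ) + 1⌋ = j + 1 := by exact_mod_cast Int.floor_intCast (j + 1)
    simp [hfloor]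

section
variable {X Y : Type*} [TopologicalSpace X] [TopologicalSpace Y] {m : ℕ}

theorem evalMap_succ_apply (γ : C(I, X)) (i : Fin (m + 1)) :
    evalMap X (m + 1) γ i = γ (projIcc 0 1 zero_le_one ((i : ℕ) / m)) := by
  simp [evalMap]

theorem projIcc_clamp_div (m : ℕ) (j : ℤ) :
    projIcc (0 : ℝ) 1 zero_le_one ((Fin.clamp j.toNat m : ℕ) / m) =
      projIcc 0 1 zero_le_one ((j : ℝ) / m) := by
  rcases Nat.eq_zero_or_pos m with rfl | hm
  · simp
  have hm' : (0 : ℝ) < m := by exact_mod_cast hm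
  simp only [Fin.clamp]
  rcases le_total j 0 with hj | hj
  · rw [projIcc_of_le_left _ (by simp [Int.toNat_of_nonpos hj]),
      projIcc_of_le_left _ (div_nonpos_of_nonpos_of_nonneg (by exact_mod_cast hj) hm'.le)]
  rcases le_total (m : ℤ) j with hmj | hjm
  · rw [projIcc_of_right_le _ (by rw [min_eq_right (by omega), div_self hm'.ne']),
      projIcc_of_right_le _ ((one_le_div hm').2 (by exact_mod_cast hmj))]
  · rw [min_eq_left (by omega)]
    congr 2
    exact_mod_cast Int.toNat_of_nonneg hj

theorem coe_projIcc_div_mul {i : ℕ} (hi : i ≤ m) :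
    (projIcc (0 : ℝ) 1 zero_le_one (i / m) : ℝ) * m = i := by
  rcases Nat.eq_zero_or_pos m with rfl | hm
  · simp [Nat.le_zero.1 hi]
  have hm' : (0 : ℝ) < m := by exact_mod_cast hm
  rw [projIcc_of_mem _ ⟨by positivity, (div_le_one hm').2 (by exact_mod_cast hi)⟩,
    div_mul_cancel₀ _ hm'.ne']

noncomputable def evalSegment (γ : C(I, X)) (m : ℕ) (j : ℤ) :
    Path (evalMap X (m + 1) γ (Fin.clamp j.toNat m))
      (evalMap X (m + 1) γ (Fin.clamp (j + 1).toNat m)) where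
  toFun s := γ (projIcc 0 1 zero_le_one ((j + s) / m))
  continuous_toFun := by fun_prop
  source' := by rw [evalMap_succ_apply, projIcc_clamp_div]; simp
  target' := by rw [evalMap_succ_apply, projIcc_clamp_div]; simp

theorem continuous_evalSegment (γ : C(Y, C(I, X))) (m : ℕ) (j : ℤ) :
    Continuous ↿fun y => evalSegment (γ y) m j := by
  change Continuous fun p : Y × I => γ p.1 (projIcc 0 1 zero_le_one ((j + p.2) / m))
  fun_prop

variable {f g : C(Y, Fin (m + 1) → X)}

noncomputable def ContinuousMap.Homotopy.liftCell (F : f.Homotopy g) (γ : C(Y, C(I, X)))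
    (hγ : ∀ y, evalMap X (m + 1) (γ y) = g y) (j : ℤ) (y : Y) :
    Path (f y (Fin.clamp j.toNat m)) (f y (Fin.clamp (j + 1).toNat m)) :=
  ((F.evalAt y).map (continuous_apply _)).trans
    (((evalSegment (γ y) m j).cast (by rw [hγ]) (by rw [hγ])).trans
      ((F.evalAt y).map (continuous_apply _)).symm)

theorem ContinuousMap.Homotopy.continuous_liftCell (F : f.Homotopy g) (γ : C(Y, C(I, X)))
    (hγ : ∀ y, evalMap X (m + 1) (γ y) = g y) (j : ℤ) :
    Continuous ↿(F.liftCell γ hγ j) := by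
  have hleg : ∀ k, Continuous ↿fun y => (F.evalAt y).map (continuous_apply k) := fun k => by
    change Continuous fun p : Y × I => F (p.2, p.1) k
    fun_prop
  have hseg : Continuous ↿fun y => (evalSegment (γ y) m j).cast (by rw [hγ]) (by rw [hγ]) :=
    continuous_evalSegment γ m j
  exact Path.trans_continuous_family _ (hleg _) _ <|
    Path.trans_continuous_family _ hseg _ <| Path.symm_continuous_family _ (hleg _)

theorem ContinuousMap.Homotopy.exists_evalMap_eq (F : f.Homotopy g) (γ : C(Y, C(I, X)))
    (hγ : ∀ y, evalMap X (m + 1) (γ y) = g y) :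
    ∃ δ : C(Y, C(I, X)), ∀ y, evalMap X (m + 1) (δ y) = f y := by
  have hG := (Path.continuous_extend_floor_fract _ (F.continuous_liftCell γ hγ)).comp
    (f := fun p : Y × I => (p.1, (p.2 : ℝ) * m)) (by fun_prop)
  refine ⟨ContinuousMap.curry ⟨_, hG⟩, fun y => funext fun i => ?_⟩
  have hi : (i : ℕ) ≤ m := Nat.lt_succ_iff.1 i.2
  have hclamp : Fin.clamp i m = i := Fin.ext (min_eq_left hi)
  simp [evalMap_succ_apply, coe_projIcc_div_mul hi, hclamp]

end

/-- If `A ⊆ Xⁿ` admits a continuous section of `e_n` and `B ⊆ Xⁿ` deforms into `A`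
within `Xⁿ`, then `B` admits a continuous section of `e_n`. -/
theorem stmt4 {X : Type*} [TopologicalSpace X] (n : ℕ) (hn : 2 ≤ n)
    (A B : Set (Fin n → X))
    (sA : (Fin n → X) → C(unitInterval, X)) (hsA : ContinuousOn sA A)
    (hsecA : ∀ a ∈ A, evalMap X n (sA a) = a)
    (H : (Fin n → X) × unitInterval → (Fin n → X))
    (hH : ContinuousOn H (B ×ˢ (Set.univ : Set unitInterval)))
    (hH0 : ∀ b ∈ B, H (b, 0) = b) (hH1 : ∀ b ∈ B, H (b, 1) ∈ A) :
    ∃ sB : (Fin n → X) → C(unitInterval, X),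
      ContinuousOn sB B ∧ ∀ b ∈ B, evalMap X n (sB b) = b := by
  classical
  obtain ⟨m, rfl⟩ : ∃ m, n = m + 1 := ⟨n - 1, by omega⟩
  have hHB : Continuous fun p : I × B => H (p.2, p.1) :=
    hH.comp_continuous (by fun_prop) fun p => ⟨p.2.2, trivial⟩
  let F : ContinuousMap.Homotopy ⟨((↑) : B → Fin (m + 1) → X), continuous_subtype_val⟩
      ⟨fun b => H (b, 1), hHB.comp (continuous_const.prodMk continuous_id)⟩ :=
    { toFun := fun p => H (p.2, p.1)
      continuous_toFun := hHB
      map_zero_left := fun b => hH0 b b.2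
      map_one_left := fun _ => rfl }
  let γ : C(B, C(I, X)) := ⟨fun b => sA (H (b, 1)),
    hsA.comp_continuous (F.continuous.comp (continuous_const.prodMk continuous_id))
      fun b => hH1 b b.2⟩
  obtain ⟨δ, hδ⟩ := F.exists_evalMap_eq γ fun b => hsecA _ (hH1 b b.2)
  refine ⟨fun b => if hb : b ∈ B then δ ⟨b, hb⟩ else sA b, ?_, fun b hb => ?_⟩
  · rw [continuousOn_iff_continuous_domRestrict, domRestrict_dite]
    exact δ.continuous
  · simpa [hb] using hδ ⟨b, hb⟩
end
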